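/- If N : ℝ^{m(n_M+1)} → ℝ^m is a contraction in the sup-block norm with constant c < 1/(n_M+1) around a fixed point, i.e., ‖N(x_0,…,x_{n_M}) − z*‖ ≤ c Σ_{i=0}^{n_M} ‖x_i − z*‖ where z* = N(z*,…,z*), then every trajectory of z_{n+1} = N(z_n,…,z_{n−n_M}) converges to z*: ‖z_n − z*‖ → 0 as n → ∞. -/

import Mathlib

/-!
Put `aₙ = ‖zₙ − z*‖` and `q = c(n_M + 1) < 1`. Each term is at most `q` times the largest of the
`n_M + 1` terms before it, so the sequence never exceeds the sum `B` of its first `n_M + 1` terms,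
and after every further block of `n_M + 1` steps its bound shrinks by the factor `q`. Hence
`aₙ ≤ q ^ ⌊n / (n_M + 1)⌋ B → 0`.
-/

open Filter Finset Topology

section WindowRecursion

variable {a : ℕ → ℝ} {c : ℝ} {k : ℕ}

lemma le_mul_of_window_le (hc0 : 0 ≤ c)
    (hrec : ∀ n, k ≤ n → a (n + 1) ≤ c * ∑ i ∈ range (k + 1), a (n - i))
    {n : ℕ} (hn : k ≤ n) {M : ℝ} (hM : ∀ i ≤ k, a (n - i) ≤ M) :
    a (n + 1) ≤ c * (k + 1) * M :=
  calc a (n + 1) ≤ c * ∑ i ∈ range (k + 1), a (n - i) := hrec n hn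
    _ ≤ c * ∑ _i ∈ range (k + 1), M := by
        gcongr with i hi
        exact hM i (Nat.lt_succ_iff.mp (mem_range.mp hi))
    _ = c * (k + 1) * M := by simp only [sum_const, card_range, nsmul_eq_mul]; push_cast; ring

lemma le_sum_range_of_window_recursion (ha : ∀ n, 0 ≤ a n) (hc0 : 0 ≤ c)
    (hc1 : c * (k + 1) < 1)
    (hrec : ∀ n, k ≤ n → a (n + 1) ≤ c * ∑ i ∈ range (k + 1), a (n - i)) (n : ℕ) :
    a n ≤ ∑ i ∈ range (k + 1), a i := by
  set B := ∑ i ∈ range (k + 1), a i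
  induction n using Nat.strong_induction_on with
  | _ n ih =>
    rcases le_or_gt n k with hnk | hkn
    · exact single_le_sum (fun i _ => ha i) (mem_range.mpr (Nat.lt_succ_of_le hnk))
    · obtain ⟨n, rfl⟩ : ∃ n', n = n' + 1 := ⟨n - 1, by omega⟩
      have hB : 0 ≤ B := sum_nonneg fun i _ => ha i
      calc a (n + 1) ≤ c * (k + 1) * B :=
            le_mul_of_window_le hc0 hrec (by omega) fun i _ => ih _ (by omega)
        _ ≤ B := mul_le_of_le_one_left hB hc1.le

lemma le_pow_mul_sum_range_of_window_recursion (ha : ∀ n, 0 ≤ a n) (hc0 : 0 ≤ c)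
    (hc1 : c * (k + 1) < 1)
    (hrec : ∀ n, k ≤ n → a (n + 1) ≤ c * ∑ i ∈ range (k + 1), a (n - i)) (j : ℕ) :
    ∀ n, j * (k + 1) ≤ n → a n ≤ (c * (k + 1)) ^ j * ∑ i ∈ range (k + 1), a i := by
  induction j with
  | zero =>
    intro n _
    simpa using le_sum_range_of_window_recursion ha hc0 hc1 hrec n
  | succ j ih =>
    intro n hn
    rw [Nat.succ_mul] at hn
    obtain ⟨n, rfl⟩ : ∃ n', n = n' + 1 := ⟨n - 1, by omega⟩
    rw [pow_succ', mul_assoc]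
    exact le_mul_of_window_le hc0 hrec (by omega) fun i hi => ih _ (by omega)

theorem tendsto_zero_of_window_recursion (ha : ∀ n, 0 ≤ a n) (hc0 : 0 ≤ c)
    (hc1 : c * (k + 1) < 1)
    (hrec : ∀ n, k ≤ n → a (n + 1) ≤ c * ∑ i ∈ range (k + 1), a (n - i)) :
    Tendsto a atTop (𝓝 0) := by
  have hbound (n : ℕ) : a n ≤ (c * (k + 1)) ^ (n / (k + 1)) * ∑ i ∈ range (k + 1), a i :=
    le_pow_mul_sum_range_of_window_recursion ha hc0 hc1 hrec _ n (Nat.div_mul_le_self n (k + 1))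
  have hgeom : Tendsto (fun j : ℕ => (c * (k + 1)) ^ j * ∑ i ∈ range (k + 1), a i)
      atTop (𝓝 0) := by
    simpa using (tendsto_pow_atTop_nhds_zero_of_lt_one (by positivity) hc1).mul_const _
  exact squeeze_zero ha hbound (hgeom.comp (Nat.tendsto_div_const_atTop k.succ_ne_zero))

end WindowRecursion

theorem memory_contraction_convergence_general (m nM : ℕ)
    (zs : Fin m → ℝ) (c : ℝ) (hc0 : 0 ≤ c) (hc1 : c * (nM + 1) < 1)
    (N : (Fin (nM + 1) → (Fin m → ℝ)) → (Fin m → ℝ))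
    (hcontr : ∀ x : Fin (nM + 1) → (Fin m → ℝ),
      ‖N x - zs‖ ≤ c * ∑ i : Fin (nM + 1), ‖x i - zs‖)
    (z : ℕ → (Fin m → ℝ))
    (hrec : ∀ n : ℕ, nM ≤ n → z (n + 1) = N (fun i => z (n - (i : ℕ)))) :
    Filter.Tendsto (fun n : ℕ => ‖z n - zs‖) Filter.atTop (nhds 0) := by
  refine tendsto_zero_of_window_recursion (fun n => norm_nonneg _) hc0 hc1 fun n hn => ?_
  rw [hrec n hn, ← Fin.sum_univ_eq_sum_range (fun i => ‖z (n - i) - zs‖)]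
  exact hcontr _

/-- If `N` is a contraction around a fixed point `z*` in the sense
`‖N(x₀,…,x_{n_M}) − z*‖ ≤ c Σᵢ ‖xᵢ − z*‖` with `0 ≤ c` and `c(n_M+1) < 1`, then every
trajectory of `z_{n+1} = N(zₙ,…,z_{n−n_M})` converges to `z*`. -/
theorem memory_contraction_convergence (m nM : ℕ) (hm : 1 ≤ m)
    (zs : Fin m → ℝ) (c : ℝ) (hc0 : 0 ≤ c) (hc1 : c * (nM + 1) < 1)
    (N : (Fin (nM + 1) → (Fin m → ℝ)) → (Fin m → ℝ))
    (hfix : N (fun _ => zs) = zs)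
    (hcontr : ∀ x : Fin (nM + 1) → (Fin m → ℝ),
      ‖N x - zs‖ ≤ c * ∑ i : Fin (nM + 1), ‖x i - zs‖)
    (z : ℕ → (Fin m → ℝ))
    (hrec : ∀ n : ℕ, nM ≤ n → z (n + 1) = N (fun i => z (n - (i : ℕ)))) :
    Filter.Tendsto (fun n : ℕ => ‖z n - zs‖) Filter.atTop (nhds 0) :=
  memory_contraction_convergence_general m nM zs c hc0 hc1 N hcontr z hrec
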